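/- Assume (H1) and let l ∈ (0,h] satisfy M · l^{α+k+1-γ} · Γ(k+1)/Γ(α+k+1) ≤ b. Then for all t ∈ (1,1+l]: (log t)^{1-γ} |φ₁(t) - φ₀(t)| ≤ M (log t)^{α+k+1-γ} Γ(k+1)/Γ(α+k+1). -/

import Mathlib

/-
`φ₁ - φ₀` is the Hadamard fractional integral of order `α` of `s ↦ f (s, φ₀ s)`, and
`φ₀ s = (log s)^(γ-1) x₀` lies where (H1) bounds `f` by `M (log s)^k`. The substitution `s = exp u`
turns the Hadamard integral of `(log s)^k` into a Beta integral, which equals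
`Γ(k+1)/Γ(α+k+1) (log t)^(α+k)`; multiplying by `(log t)^(1-γ)` gives the claim.
-/

open Real MeasureTheory intervalIntegral Set Filter

/-- Picard iterates for the Hilfer-Hadamard initial value problem. -/
noncomputable def picard (α γ x₀ : ℝ) (f : ℝ → ℝ → ℝ) : ℕ → ℝ → ℝ
  | 0 => fun t => x₀ * Real.log t ^ (γ - 1)
  | n + 1 => fun t => x₀ * Real.log t ^ (γ - 1) +
      (1 / Real.Gamma α) *
        ∫ s in (1:ℝ)..t, Real.log (t / s) ^ (α - 1) * f s (picard α γ x₀ f n s) / s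

theorem integral_rpow_mul_sub_rpow {a b T : ℝ} (ha : 0 < a) (hb : 0 < b) (hT : 0 < T) :
    ∫ x in (0:ℝ)..T, x ^ (a - 1) * (T - x) ^ (b - 1)
      = T ^ (a + b - 1) * (Gamma a * Gamma b / Gamma (a + b)) := by
  apply Complex.ofReal_injective
  rw [← intervalIntegral.integral_ofReal]
  have hcpow : ∀ x ∈ uIcc 0 T, ((x ^ (a - 1) * (T - x) ^ (b - 1) : ℝ) : ℂ)
      = (x : ℂ) ^ ((a : ℂ) - 1) * ((T : ℂ) - x) ^ ((b : ℂ) - 1) := by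
    intro x hx
    rw [uIcc_of_le hT.le] at hx
    push_cast [Complex.ofReal_cpow hx.1, Complex.ofReal_cpow (sub_nonneg.2 hx.2)]
    rfl
  rw [intervalIntegral.integral_congr hcpow, Complex.betaIntegral_scaled _ _ hT,
    Complex.betaIntegral_eq_Gamma_mul_div _ _ (by simpa) (by simpa)]
  push_cast [Complex.ofReal_cpow hT.le, ← Complex.Gamma_ofReal]
  rfl

theorem integral_comp_exp_Ioc {E : Type*} [NormedAddCommGroup E] [NormedSpace ℝ E]
    (g : ℝ → E) (a b : ℝ) :
    ∫ x in Ioc a b, exp x • g (exp x) = ∫ y in Ioc (exp a) (exp b), g y := by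
  rw [← image_exp_Ioc]
  simpa [abs_of_pos (exp_pos _)] using (integral_image_eq_integral_abs_deriv_smul
    measurableSet_Ioc (fun x _ ↦ (hasDerivAt_exp x).hasDerivWithinAt)
    exp_injective.injOn g).symm

/-- The left-sided Hadamard fractional integral of order `α` with base point `1`. -/
noncomputable def hadamardIntegral (α : ℝ) (g : ℝ → ℝ) (t : ℝ) : ℝ :=
  (1 / Gamma α) * ∫ s in (1:ℝ)..t, log (t / s) ^ (α - 1) * g s / s

theorem integral_log_div_rpow_mul_log_rpow {α k t : ℝ} (hα : 0 < α) (hk : -1 < k) (ht : 1 < t) :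
    ∫ s in (1:ℝ)..t, log (t / s) ^ (α - 1) * log s ^ k / s
      = log t ^ (α + k) * (Gamma (k + 1) * Gamma α / Gamma (α + k + 1)) := by
  have hL : 0 < log t := log_pos ht
  have hsubst : ∀ u ∈ Ioc 0 (log t),
      exp u • (log (t / exp u) ^ (α - 1) * log (exp u) ^ k / exp u)
        = u ^ (k + 1 - 1) * (log t - u) ^ (α - 1) := by
    intro u _
    rw [smul_eq_mul, log_div (by positivity) (exp_pos u).ne', log_exp, add_sub_cancel_right]
    field_simp
  have hexp := integral_comp_exp_Ioc (fun s ↦ log (t / s) ^ (α - 1) * log s ^ k / s) 0 (log t)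
  rw [exp_zero, exp_log (by linarith)] at hexp
  rw [intervalIntegral.integral_of_le ht.le, ← hexp,
    setIntegral_congr_fun measurableSet_Ioc hsubst, ← intervalIntegral.integral_of_le hL.le,
    integral_rpow_mul_sub_rpow (by linarith) hα hL]
  ring_nf

theorem hadamardIntegral_log_rpow {α k t : ℝ} (hα : 0 < α) (hk : -1 < k) (ht : 1 < t) :
    hadamardIntegral α (fun s ↦ log s ^ k) t
      = Gamma (k + 1) / Gamma (α + k + 1) * log t ^ (α + k) := by
  rw [hadamardIntegral, integral_log_div_rpow_mul_log_rpow hα hk ht]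
  field_simp [(Gamma_pos_of_pos hα).ne']

theorem abs_hadamardIntegral_le {α k M t : ℝ} {g : ℝ → ℝ} (hα : 0 < α) (hk : -1 < k)
    (ht : 1 < t) (hg : ∀ s ∈ Ioc 1 t, |g s| ≤ M * log s ^ k) :
    |hadamardIntegral α g t| ≤ M * (Gamma (k + 1) / Gamma (α + k + 1)) * log t ^ (α + k) := by
  have hΓ : 0 < 1 / Gamma α := one_div_pos.2 (Gamma_pos_of_pos hα)
  -- integrable because its integral is positive, whereas a non-integrable function integrates to `0`
  have hint : IntervalIntegrable (fun s ↦ log (t / s) ^ (α - 1) * log s ^ k / s) volume 1 t := by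
    refine intervalIntegrable_of_integral_ne_zero ?_
    rw [integral_log_div_rpow_mul_log_rpow hα hk ht]
    have := log_pos ht
    have := Gamma_pos_of_pos hα
    have := Gamma_pos_of_pos (neg_lt_iff_pos_add.1 hk)
    have := Gamma_pos_of_pos (by linarith : 0 < α + k + 1)
    positivity
  have hpointwise : ∀ s ∈ Ioc 1 t,
      ‖log (t / s) ^ (α - 1) * g s / s‖ ≤ M * (log (t / s) ^ (α - 1) * log s ^ k / s) := by
    rintro s ⟨hs1, hst⟩
    have hs0 : 0 < s := by linarith
    have hkernel : 0 ≤ log (t / s) ^ (α - 1) :=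
      rpow_nonneg (log_nonneg ((one_le_div hs0).2 hst)) _
    rw [norm_div, norm_mul, norm_of_nonneg hkernel, norm_of_nonneg hs0.le, mul_div_assoc',
      mul_left_comm, Real.norm_eq_abs]
    gcongr
    exact hg s ⟨hs1, hst⟩
  calc |hadamardIntegral α g t|
      ≤ 1 / Gamma α * ∫ s in (1:ℝ)..t, M * (log (t / s) ^ (α - 1) * log s ^ k / s) := by
        rw [hadamardIntegral, abs_mul, abs_of_pos hΓ]
        gcongr
        exact intervalIntegral.norm_integral_le_of_norm_le ht.le
          (Eventually.of_forall hpointwise) (hint.const_mul M)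
    _ = M * (Gamma (k + 1) / Gamma (α + k + 1)) * log t ^ (α + k) := by
        rw [intervalIntegral.integral_const_mul, mul_left_comm, ← hadamardIntegral,
          hadamardIntegral_log_rpow hα hk ht, mul_assoc]

theorem picard_first_difference_bound_general (α β γ x₀ h b M k : ℝ) (f : ℝ → ℝ → ℝ)
    (hα0 : 0 < α) (hα1 : α < 1) (hβ0 : 0 ≤ β)
    (hb : 0 < b) (hk : β * (1 - α) - 1 < k)
    (H1bdd : ∀ t ∈ Set.Ioc (1:ℝ) (1 + h), ∀ x ∈ Set.Icc (x₀ - b) (x₀ + b),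
      |f t (Real.log t ^ (γ - 1) * x)| ≤ M * Real.log t ^ k)
    (l : ℝ) (hlh : l ≤ h)
    : ∀ t ∈ Set.Ioc (1:ℝ) (1 + l),
      Real.log t ^ (1 - γ) * |picard α γ x₀ f 1 t - picard α γ x₀ f 0 t|
        ≤ M * Real.log t ^ (α + k + 1 - γ) * (Real.Gamma (k + 1) / Real.Gamma (α + k + 1)) := by
  rintro t ⟨ht1, htl⟩
  have hk1 : -1 < k := by nlinarith
  have hdiff : picard α γ x₀ f 1 t - picard α γ x₀ f 0 t
      = hadamardIntegral α (fun s ↦ f s (picard α γ x₀ f 0 s)) t := by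
    simp only [picard, hadamardIntegral, add_sub_cancel_left]
  have hbound : ∀ s ∈ Ioc 1 t, |f s (picard α γ x₀ f 0 s)| ≤ M * log s ^ k := fun s hs ↦ by
    simpa only [picard, mul_comm] using
      H1bdd s ⟨hs.1, by linarith [hs.2]⟩ x₀ ⟨by linarith, by linarith⟩
  calc log t ^ (1 - γ) * |picard α γ x₀ f 1 t - picard α γ x₀ f 0 t|
      ≤ log t ^ (1 - γ) * (M * (Gamma (k + 1) / Gamma (α + k + 1)) * log t ^ (α + k)) := by
        rw [hdiff]
        exact mul_le_mul_of_nonneg_left (abs_hadamardIntegral_le hα0 hk1 ht1 hbound)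
          (rpow_nonneg (log_nonneg ht1.le) _)
    _ = M * log t ^ (α + k + 1 - γ) * (Gamma (k + 1) / Gamma (α + k + 1)) := by
        rw [show α + k + 1 - γ = 1 - γ + (α + k) by ring, rpow_add (log_pos ht1) (1 - γ) (α + k)]
        ring

theorem picard_first_difference_bound (α β γ x₀ h b M k : ℝ) (f : ℝ → ℝ → ℝ)
    (hα0 : 0 < α) (hα1 : α < 1) (hβ0 : 0 ≤ β) (hβ1 : β ≤ 1)
    (hγ : γ = α + β * (1 - α))
    (hh : 0 < h) (hb : 0 < b) (hM : 0 ≤ M) (hk : β * (1 - α) - 1 < k)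
    (H1cont : ∀ t ∈ Set.Ioc (1:ℝ) (1 + h),
      ContinuousOn (fun x : ℝ => f t (Real.log t ^ (γ - 1) * x)) (Set.Icc (x₀ - b) (x₀ + b)))
    (H1meas : ∀ x ∈ Set.Icc (x₀ - b) (x₀ + b),
      AEMeasurable (fun t : ℝ => f t (Real.log t ^ (γ - 1) * x))
        (MeasureTheory.volume.restrict (Set.Ioc (1:ℝ) (1 + h))))
    (H1bdd : ∀ t ∈ Set.Ioc (1:ℝ) (1 + h), ∀ x ∈ Set.Icc (x₀ - b) (x₀ + b),
      |f t (Real.log t ^ (γ - 1) * x)| ≤ M * Real.log t ^ k)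
    (l : ℝ) (hl0 : 0 < l) (hlh : l ≤ h)
    (hlb : M * l ^ (α + k + 1 - γ) * (Real.Gamma (k + 1) / Real.Gamma (α + k + 1)) ≤ b)
    : ∀ t ∈ Set.Ioc (1:ℝ) (1 + l),
      Real.log t ^ (1 - γ) * |picard α γ x₀ f 1 t - picard α γ x₀ f 0 t|
        ≤ M * Real.log t ^ (α + k + 1 - γ) * (Real.Gamma (k + 1) / Real.Gamma (α + k + 1)) :=
  picard_first_difference_bound_general α β γ x₀ h b M k f hα0 hα1 hβ0 hb hk H1bdd l hlh
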